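/- arXiv:2109.13891 — 2 statements merged into one kernel-verified Lean document; each statement's English description precedes it below -/
import Mathlib

section
/- Let n be a natural number, let K : Matrix (Fin n) (Fin n) ℝ be symmetric positive definite, let k' : Fin n → ℝ and c : ℝ, and assume the block matrix K̂ = [[K, k'], [k'ᵀ, c]] of size (n+1)×(n+1) is positive definite. Then for every u : Fin n → ℝ and v : ℝ, writing w = (u, v), one has wᵀ K̂⁻¹ w ≥ uᵀ K⁻¹ u; consequently, for any κ ∈ ℝ the predictive variance satisfies κ − wᵀ K̂⁻¹ w ≤ κ − uᵀ K⁻¹ u. -/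
/-!
For positive definite `M`, `wᵀ M⁻¹ w = max_y (2 yᵀw - yᵀ M y)`, the maximum being attained at
`y = M⁻¹ w` (complete the square in the quadratic form of `M`). Testing the block matrix
`K̂ = [[K, k'], [k'ᵀ, c]]` against `y = (K⁻¹ u, 0)` only sees the block `K` and produces exactly
`uᵀ K⁻¹ u`, which is therefore a lower bound for `wᵀ K̂⁻¹ w`.
-/

open Matrix

namespace Matrix

variable {m n : Type*} [Fintype m] [Fintype n]

theorem PosSemidef.two_mul_dotProduct_mulVec_sub_le {M : Matrix m m ℝ} (hM : M.PosSemidef)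
    (x y : m → ℝ) : 2 * (y ⬝ᵥ (M *ᵥ x)) - y ⬝ᵥ (M *ᵥ y) ≤ x ⬝ᵥ (M *ᵥ x) := by
  have hsymm : x ⬝ᵥ (M *ᵥ y) = y ⬝ᵥ (M *ᵥ x) := by
    rw [dotProduct_mulVec, ← mulVec_transpose, ← conjTranspose_eq_transpose_of_trivial,
      hM.isHermitian.eq, dotProduct_comm]
  have := hM.dotProduct_mulVec_nonneg (x - y)
  simp only [star_trivial, mulVec_sub, dotProduct_sub, sub_dotProduct] at this
  linarith

variable [DecidableEq m]

theorem mulVec_nonsing_inv_mulVec {M : Matrix m m ℝ} (hM : IsUnit M) (w : m → ℝ) :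
    M *ᵥ (M⁻¹ *ᵥ w) = w := by
  rw [mulVec_mulVec, mul_nonsing_inv _ ((isUnit_iff_isUnit_det M).mp hM), one_mulVec]

theorem PosDef.two_mul_dotProduct_sub_le_dotProduct_inv_mulVec {M : Matrix m m ℝ}
    (hM : M.PosDef) (w y : m → ℝ) :
    2 * (y ⬝ᵥ w) - y ⬝ᵥ (M *ᵥ y) ≤ w ⬝ᵥ (M⁻¹ *ᵥ w) := by
  have hw := mulVec_nonsing_inv_mulVec hM.isUnit w
  have := hM.posSemidef.two_mul_dotProduct_mulVec_sub_le (M⁻¹ *ᵥ w) y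
  rwa [hw, dotProduct_comm (M⁻¹ *ᵥ w)] at this

theorem dotProduct_nonsing_inv_mulVec_le_of_fromBlocks_posDef {A : Matrix m m ℝ}
    {B : Matrix m n ℝ} {C : Matrix n m ℝ} {D : Matrix n n ℝ} [DecidableEq n]
    (hM : (fromBlocks A B C D).PosDef) (u : m → ℝ) (v : n → ℝ) :
    u ⬝ᵥ (A⁻¹ *ᵥ u) ≤ Sum.elim u v ⬝ᵥ ((fromBlocks A B C D)⁻¹ *ᵥ Sum.elim u v) := by
  have hA : A.PosDef := hM.submatrix Sum.inl_injective
  set y : m ⊕ n → ℝ := Sum.elim (A⁻¹ *ᵥ u) 0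
  have hyw : y ⬝ᵥ Sum.elim u v = u ⬝ᵥ (A⁻¹ *ᵥ u) := by
    simp [y, sumElim_dotProduct_sumElim, dotProduct_comm]
  have hyMy : y ⬝ᵥ (fromBlocks A B C D *ᵥ y) = u ⬝ᵥ (A⁻¹ *ᵥ u) := by
    simp [y, fromBlocks_mulVec, sumElim_dotProduct_sumElim, mulVec_nonsing_inv_mulVec hA.isUnit,
      dotProduct_comm]
  have := hM.two_mul_dotProduct_sub_le_dotProduct_inv_mulVec (Sum.elim u v) y
  linarith

end Matrix

theorem predictive_variance_nonincreasing_general (n : ℕ)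
    (K : Matrix (Fin n) (Fin n) ℝ)
    (k' : Fin n → ℝ) (c : ℝ)
    (Khat : Matrix (Fin n ⊕ Unit) (Fin n ⊕ Unit) ℝ)
    (hKhat : Khat = Matrix.fromBlocks K (Matrix.replicateCol Unit k') (Matrix.replicateRow Unit k')
      (Matrix.of fun _ _ => c))
    (hKhatPD : Khat.PosDef) :
    ∀ (u : Fin n → ℝ) (v : ℝ),
      u ⬝ᵥ (K⁻¹ *ᵥ u) ≤ (Sum.elim u fun _ => v) ⬝ᵥ (Khat⁻¹ *ᵥ (Sum.elim u fun _ => v)) ∧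
      ∀ κ : ℝ,
        κ - (Sum.elim u fun _ => v) ⬝ᵥ (Khat⁻¹ *ᵥ (Sum.elim u fun _ => v)) ≤
          κ - u ⬝ᵥ (K⁻¹ *ᵥ u) := by
  intro u v
  subst hKhat
  have h := dotProduct_nonsing_inv_mulVec_le_of_fromBlocks_posDef hKhatPD u fun _ => v
  exact ⟨h, fun κ => sub_le_sub_left h κ⟩

/-- Non-increase of the Gaussian process predictive variance when adding an observation.
`K` is symmetric positive definite; the block matrix `K̂ = [[K, k'], [k'ᵀ, c]]` is positive
definite.  Then for every `u, v`, writing `w = (u, v)`, one has `wᵀ K̂⁻¹ w ≥ uᵀ K⁻¹ u`, and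
hence `κ − wᵀ K̂⁻¹ w ≤ κ − uᵀ K⁻¹ u` for any `κ`. -/
theorem predictive_variance_nonincreasing (n : ℕ)
    (K : Matrix (Fin n) (Fin n) ℝ) (hK : K.PosDef)
    (k' : Fin n → ℝ) (c : ℝ)
    (Khat : Matrix (Fin n ⊕ Unit) (Fin n ⊕ Unit) ℝ)
    (hKhat : Khat = Matrix.fromBlocks K (Matrix.replicateCol Unit k') (Matrix.replicateRow Unit k')
      (Matrix.of fun _ _ => c))
    (hKhatPD : Khat.PosDef) :
    ∀ (u : Fin n → ℝ) (v : ℝ),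
      u ⬝ᵥ (K⁻¹ *ᵥ u) ≤ (Sum.elim u fun _ => v) ⬝ᵥ (Khat⁻¹ *ᵥ (Sum.elim u fun _ => v)) ∧
      ∀ κ : ℝ,
        κ - (Sum.elim u fun _ => v) ⬝ᵥ (Khat⁻¹ *ᵥ (Sum.elim u fun _ => v)) ≤
          κ - u ⬝ᵥ (K⁻¹ *ᵥ u) :=
  predictive_variance_nonincreasing_general n K k' c Khat hKhat hKhatPD
end

section
/- Let n be a natural number, let K : Matrix (Fin n) (Fin n) ℝ be symmetric positive definite, let k' : Fin n → ℝ and c : ℝ, and assume the block matrix K̂ = [[K, k'], [k'ᵀ, c]] of size (n+1)×(n+1) is positive definite (so the Schur complement m = c − k'ᵀ K⁻¹ k' is strictly positive). Let u : Fin n → ℝ and v : ℝ satisfy uᵀ K⁻¹ k' ≠ v, and write w = (u, v). Then wᵀ K̂⁻¹ w > uᵀ K⁻¹ u; consequently, for any κ ∈ ℝ, κ − wᵀ K̂⁻¹ w < κ − uᵀ K⁻¹ u. -/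
/-!
For positive definite `M` and any `y`, the gap `w ⬝ᵥ M⁻¹ w - (2 w ⬝ᵥ y - y ⬝ᵥ M y)` is the
`M`-energy of `M⁻¹ w - y`, so it is positive unless `M y = w`. Testing with `y = (K⁻¹ u, 0)` turns
`2 w ⬝ᵥ y - y ⬝ᵥ K̂ y` into `uᵀ K⁻¹ u`, and `K̂ y = (u, k'ᵀ K⁻¹ u)` differs from `w = (u, v)`
exactly when `uᵀ K⁻¹ k' ≠ v`.
-/

open Matrix

namespace Matrix

variable {ι R : Type*} [Fintype ι]

theorem dotProduct_mulVec_sub_of_mulVec_eq [CommRing R] {M : Matrix ι ι R} (hM : Mᵀ = M)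
    {x w : ι → R} (hx : M *ᵥ x = w) (y : ι → R) :
    (x - y) ⬝ᵥ (M *ᵥ (x - y)) = w ⬝ᵥ x - 2 * (w ⬝ᵥ y) + y ⬝ᵥ (M *ᵥ y) := by
  have hxy : x ⬝ᵥ (M *ᵥ y) = w ⬝ᵥ y := by
    rw [dotProduct_mulVec, ← mulVec_transpose, hM, hx]
  rw [mulVec_sub, dotProduct_sub, sub_dotProduct, sub_dotProduct, hx, hxy,
    dotProduct_comm x w, dotProduct_comm y w]
  ring

theorem PosDef.two_mul_dotProduct_sub_lt_dotProduct_inv_mulVec [DecidableEq ι]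
    {M : Matrix ι ι ℝ} (hM : M.PosDef) {w y : ι → ℝ} (hy : M *ᵥ y ≠ w) :
    2 * (w ⬝ᵥ y) - y ⬝ᵥ (M *ᵥ y) < w ⬝ᵥ (M⁻¹ *ᵥ w) := by
  set x := M⁻¹ *ᵥ w
  have hx : M *ᵥ x = w := by
    rw [mulVec_mulVec, mul_nonsing_inv _ ((isUnit_iff_isUnit_det M).mp hM.isUnit), one_mulVec]
  have hxy : x - y ≠ 0 := fun h => hy (by rw [← sub_eq_zero.mp h, hx])
  have hsymm : Mᵀ = M := by rw [← conjTranspose_eq_transpose_of_trivial, hM.isHermitian.eq]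
  have hpos := hM.dotProduct_mulVec_pos hxy
  rw [star_trivial, dotProduct_mulVec_sub_of_mulVec_eq hsymm hx] at hpos
  linarith

theorem fromBlocks_mulVec_sumElim_inv_mulVec_zero {κ : Type*} [Fintype κ] [DecidableEq ι]
    [CommRing R] {A : Matrix ι ι R} (hA : IsUnit A.det) (B : Matrix ι κ R) (C : Matrix κ ι R)
    (D : Matrix κ κ R) (u : ι → R) :
    fromBlocks A B C D *ᵥ Sum.elim (A⁻¹ *ᵥ u) 0 = Sum.elim u (C *ᵥ (A⁻¹ *ᵥ u)) := by
  rw [fromBlocks_mulVec]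
  simp [mulVec_mulVec, mul_nonsing_inv _ hA]

theorem PosDef.dotProduct_inv_mulVec_lt_of_fromBlocks {κ : Type*} [Fintype κ] [DecidableEq ι]
    [DecidableEq κ] {A : Matrix ι ι ℝ} {B : Matrix ι κ ℝ} {C : Matrix κ ι ℝ} {D : Matrix κ κ ℝ}
    (hM : (fromBlocks A B C D).PosDef) {u : ι → ℝ} {v : κ → ℝ} (huv : C *ᵥ (A⁻¹ *ᵥ u) ≠ v) :
    u ⬝ᵥ (A⁻¹ *ᵥ u) < Sum.elim u v ⬝ᵥ ((fromBlocks A B C D)⁻¹ *ᵥ Sum.elim u v) := by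
  have hA : A.PosDef := hM.submatrix Sum.inl_injective
  have hAdet : IsUnit A.det := (isUnit_iff_isUnit_det A).mp hA.isUnit
  have hMy := fromBlocks_mulVec_sumElim_inv_mulVec_zero hAdet B C D u
  have key := hM.two_mul_dotProduct_sub_lt_dotProduct_inv_mulVec
    (w := Sum.elim u v) (y := Sum.elim (A⁻¹ *ᵥ u) 0)
    (by rw [hMy]; exact fun h => huv (congrArg (· ∘ Sum.inr) h))
  rw [hMy, sumElim_dotProduct_sumElim, sumElim_dotProduct_sumElim, dotProduct_zero,
    zero_dotProduct, add_zero, add_zero, dotProduct_comm _ u] at key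
  linarith

end Matrix

/-- Strict decrease of the Gaussian process predictive variance when adding an observation
(Proposition 3).  `K` is symmetric positive definite, the block matrix
`K̂ = [[K, k'], [k'ᵀ, c]]` is positive definite (so the Schur complement
`m = c − k'ᵀ K⁻¹ k'` is strictly positive), and `u, v` satisfy `uᵀ K⁻¹ k' ≠ v`.
Then, with `w = (u, v)`, one has `wᵀ K̂⁻¹ w > uᵀ K⁻¹ u`, and hence
`κ − wᵀ K̂⁻¹ w < κ − uᵀ K⁻¹ u` for any `κ`. -/
theorem predictive_variance_strict_decrease (n : ℕ)
    (K : Matrix (Fin n) (Fin n) ℝ) (hK : K.PosDef)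
    (k' : Fin n → ℝ) (c : ℝ)
    (Khat : Matrix (Fin n ⊕ Unit) (Fin n ⊕ Unit) ℝ)
    (hKhat : Khat = Matrix.fromBlocks K (Matrix.replicateCol Unit k') (Matrix.replicateRow Unit k')
      (Matrix.of fun _ _ => c))
    (hKhatPD : Khat.PosDef)
    (u : Fin n → ℝ) (v : ℝ) (huv : u ⬝ᵥ (K⁻¹ *ᵥ k') ≠ v) :
    u ⬝ᵥ (K⁻¹ *ᵥ u) < (Sum.elim u fun _ => v) ⬝ᵥ (Khat⁻¹ *ᵥ (Sum.elim u fun _ => v)) ∧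
    ∀ κ : ℝ,
      κ - (Sum.elim u fun _ => v) ⬝ᵥ (Khat⁻¹ *ᵥ (Sum.elim u fun _ => v)) <
        κ - u ⬝ᵥ (K⁻¹ *ᵥ u) := by
  subst hKhat
  have hKinv : (K⁻¹)ᵀ = K⁻¹ := by
    rw [← conjTranspose_eq_transpose_of_trivial, hK.inv.isHermitian.eq]
  have hcond : replicateRow Unit k' *ᵥ (K⁻¹ *ᵥ u) ≠ fun _ => v := by
    rw [replicateRow_mulVec_eq_const, dotProduct_mulVec, ← mulVec_transpose, hKinv,
      dotProduct_comm]
    exact fun h => huv (congrFun h ())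
  have hlt := hKhatPD.dotProduct_inv_mulVec_lt_of_fromBlocks hcond
  exact ⟨hlt, fun κ => sub_lt_sub_left hlt κ⟩
end
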